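/- Let Ω ⊂ ℍ be bounded and h-convex, and let f ∈ C(Ω̄) satisfy f = K on ∂Ω and f ≤ K in Ω̄ for some K ∈ ℝ. Then there exists a function f̲ ∈ C(Ω̄), h-quasiconvex in Ω, such that f̲ ≤ f in Ω̄ and f̲ = K on ∂Ω. -/

import Mathlib

noncomputable section

/-- The underlying space of the first Heisenberg group: `ℝ³`. -/
abbrev Heis := ℝ × ℝ × ℝ

/-- Heisenberg group multiplication. -/
def hmul (p q : Heis) : Heis :=
  (p.1 + q.1, p.2.1 + q.2.1, p.2.2 + q.2.2 + (p.1 * q.2.1 - q.1 * p.2.1) / 2)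

/-- Heisenberg group inverse. -/
def hinv (p : Heis) : Heis := (-p.1, -p.2.1, -p.2.2)

/-- The horizontal plane `ℍ_p = p · ℍ₀` through `p`. -/
def hplane (p : Heis) : Set Heis := {q | ∃ h : Heis, h.2.2 = 0 ∧ q = hmul p h}

/-- The (Euclidean) segment `[p,q]`. -/
def hseg (p q : Heis) : Set Heis :=
  {w | ∃ l : ℝ, 0 ≤ l ∧ l ≤ 1 ∧ w = (1 - l) • p + l • q}

/-- The half-open segment `(p,q]`. -/
def hsegHalfOpen (p q : Heis) : Set Heis :=
  {w | ∃ l : ℝ, 0 < l ∧ l ≤ 1 ∧ w = (1 - l) • p + l • q}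

/-- A set `E ⊆ ℍ` is h-convex if for every `p ∈ E` and `q ∈ ℍ_p ∩ E`,
the horizontal segment `[p,q]` lies in `E`. -/
def IsHConvex (E : Set Heis) : Prop :=
  ∀ p ∈ E, ∀ q ∈ hplane p, q ∈ E → ∀ w ∈ hseg p q, w ∈ E

/-- A set `E` is h-convex up to boundary if for every `p ∈ ∂E` and `q ∈ ℍ_p ∩ E`,
the half-open segment `(p,q]` lies in `E`. -/
def IsHConvexUpToBoundary (E : Set Heis) : Prop :=
  ∀ p ∈ frontier E, ∀ q ∈ hplane p, q ∈ E → ∀ w ∈ hsegHalfOpen p q, w ∈ E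

/-- A function `u` is h-quasiconvex on `Ω` if `u(w) ≤ max (u p) (u q)` for all
`p ∈ Ω`, `q ∈ ℍ_p ∩ Ω` and `w ∈ [p,q]`. -/
def IsHQuasiconvexOn (Ω : Set Heis) (u : Heis → ℝ) : Prop :=
  ∀ p ∈ Ω, ∀ q ∈ hplane p, q ∈ Ω → ∀ w ∈ hseg p q, u w ≤ max (u p) (u q)

/-- `Qf` is the h-quasiconvex envelope of `f` on `Ω`: the greatest h-quasiconvex
function majorized by `f` on `Ω` (equivalently, the pointwise supremum of all
h-quasiconvex minorants of `f`). -/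
def IsHQCEnvelopeOn (Ω : Set Heis) (f Qf : Heis → ℝ) : Prop :=
  IsHQuasiconvexOn Ω Qf ∧ (∀ p ∈ Ω, Qf p ≤ f p) ∧
    ∀ g : Heis → ℝ, IsHQuasiconvexOn Ω g → (∀ p ∈ Ω, g p ≤ f p) → ∀ p ∈ Ω, g p ≤ Qf p

/-- The Korányi gauge. -/
def kGauge (p : Heis) : ℝ := ((p.1 ^ 2 + p.2.1 ^ 2) ^ 2 + 16 * p.2.2 ^ 2) ^ ((1 : ℝ) / 4)

/-- The left-invariant gauge metric `d_H(p,q) = |p⁻¹ · q|_G`. -/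
def dLeft (p q : Heis) : ℝ := kGauge (hmul (hinv p) q)

/-- The right-invariant gauge metric `d̃_H(p,q) = |p · q⁻¹|_G`. -/
def dRight (p q : Heis) : ℝ := kGauge (hmul p (hinv q))

/-- The gauge ball `B_r(p) = {q : |p⁻¹ · q|_G < r}`. -/
def gball (p : Heis) (r : ℝ) : Set Heis := {q | dLeft p q < r}

/-- The horizontal gradient `∇_H φ(p) = (X₁ φ(p), X₂ φ(p))`, where
`X₁ = ∂_x − (y/2) ∂_z` and `X₂ = ∂_y + (x/2) ∂_z`. -/
def hGrad (φ : Heis → ℝ) (p : Heis) : ℝ × ℝ :=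
  (fderiv ℝ φ p ((1, 0, -p.2.1 / 2) : Heis), fderiv ℝ φ p ((0, 1, p.1 / 2) : Heis))

/-- The pairing `⟨∇_H φ(p), (p⁻¹ · ξ)_h⟩`. -/
def hpair (φ : Heis → ℝ) (p ξ : Heis) : ℝ :=
  (hGrad φ p).1 * (hmul (hinv p) ξ).1 + (hGrad φ p).2 * (hmul (hinv p) ξ).2.1

/-- Local boundedness of `u` on `A`. -/
def LocBddOn (A : Set Heis) (u : Heis → ℝ) : Prop :=
  ∀ p ∈ A, ∃ s ∈ nhds p, ∃ C : ℝ, ∀ q ∈ s ∩ A, |u q| ≤ C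

/-- `u` is a viscosity subsolution of `u + H(p, u, ∇_H u) = f` in `Ω`, where
`H(p, u, ∇_H u) = sup {⟨∇_H u(p), (p⁻¹·ξ)_h⟩ : ξ ∈ ℍ_p ∩ Ω, u(ξ) < u(p)}`
(with the supremum understood to be `0` when `∇_H φ(p) = 0`). -/
def IsSubSoln (Ω : Set Heis) (f u : Heis → ℝ) : Prop :=
  UpperSemicontinuousOn u Ω ∧ LocBddOn Ω u ∧
    ∀ p ∈ Ω, ∀ φ : Heis → ℝ, ContDiff ℝ 1 φ →
      IsMaxOn (fun q => u q - φ q) Ω p →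
        (∀ ξ ∈ hplane p, ξ ∈ Ω → u ξ < u p → u p + hpair φ p ξ ≤ f p) ∧
        (hGrad φ p = 0 → u p ≤ f p)

/-- `u` is a viscosity supersolution of `u + H(p, u, ∇_H u) = f` in `Ω`, where for
supersolutions `H(p, u, ∇_H u) = sup {⟨∇_H u(p), (p⁻¹·ξ)_h⟩ : ξ ∈ ℍ_p ∩ Ω, u(ξ) ≤ u(p)}`.
(The set `Ŝ_p(u)` always contains `p` itself, so the inequality
`u(p) + sup ≥ f(p)` is expressed in ε-form.) -/
def IsSuperSoln (Ω : Set Heis) (f u : Heis → ℝ) : Prop :=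
  LowerSemicontinuousOn u Ω ∧ LocBddOn Ω u ∧
    ∀ p ∈ Ω, ∀ φ : Heis → ℝ, ContDiff ℝ 1 φ →
      IsMinOn (fun q => u q - φ q) Ω p →
        ∀ ε > 0, ∃ ξ ∈ hplane p, ξ ∈ Ω ∧ u ξ ≤ u p ∧ f p - ε ≤ u p + hpair φ p ξ

/-- `w` is the upper semicontinuous envelope of `v` on `A`: the smallest
upper semicontinuous function on `A` that majorizes `v`. -/
def IsUscEnvOn (A : Set Heis) (v w : Heis → ℝ) : Prop :=
  UpperSemicontinuousOn w A ∧ (∀ q ∈ A, v q ≤ w q) ∧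
    ∀ z : Heis → ℝ, UpperSemicontinuousOn z A → (∀ q ∈ A, v q ≤ z q) → ∀ q ∈ A, w q ≤ z q

/-- `w` is the lower semicontinuous envelope of `v` on `A`: the largest
lower semicontinuous function on `A` minorized by `v`. -/
def IsLscEnvOn (A : Set Heis) (v w : Heis → ℝ) : Prop :=
  LowerSemicontinuousOn w A ∧ (∀ q ∈ A, w q ≤ v q) ∧
    ∀ z : Heis → ℝ, LowerSemicontinuousOn z A → (∀ q ∈ A, z q ≤ v q) → ∀ q ∈ A, z q ≤ w q

/-- The h-convex hull of `E`: the intersection of all h-convex sets containing `E`. -/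
def hconvexHull (E : Set Heis) : Set Heis := ⋂₀ {D : Set Heis | IsHConvex D ∧ E ⊆ D}

/-- The direct convexification operator
`T[f](w) = inf {max (f p) (f q) : w ∈ [p,q], p ∈ Ω, q ∈ Ω ∩ ℍ_p}`. -/
def Tconv (Ω : Set Heis) (f : Heis → ℝ) : Heis → ℝ := fun w =>
  sInf {y | ∃ p ∈ Ω, ∃ q ∈ hplane p, q ∈ Ω ∧ w ∈ hseg p q ∧ y = max (f p) (f q)}

/-!
Let `D p` be the distance from `p` to the complement of `Ω` (truncated to a large ball, so that
the infimum runs over a compact set and `D` is continuous) in the right-invariant gauge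
`‖v · p⁻¹‖`. Left translations preserve horizontal planes and segments, hence h-convexity, and
move every point by exactly `‖h‖` in this gauge. So if `‖h‖ < min (D p) (D q)` then `h · p` and
`h · q` lie in `Ω`, hence so does `h · [p, q]`; this gives `min (D p) (D q) ≤ D w` on horizontal
segments. On `Ω̄`, `D` vanishes exactly on `∂Ω`. By compactness, `K - f ≤ ψ ∘ D` on `Ω̄` for a
continuous nondecreasing `ψ` with `ψ 0 = 0` (a supremum of ramps `(K - f q) · clamp (t / D q)`),
and `K - ψ ∘ D` is the barrier.
-/

open Set

lemma hmul_assoc (a b c : Heis) : hmul (hmul a b) c = hmul a (hmul b c) := by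
  simp only [hmul]; refine Prod.ext (by ring) (Prod.ext (by ring) (by ring))

lemma hmul_hinv_hmul (v p : Heis) : hmul (hmul v (hinv p)) p = v := by
  simp only [hmul, hinv]; refine Prod.ext (by ring) (Prod.ext (by ring) (by ring))

lemma hmul_hmul_hinv (h p : Heis) : hmul (hmul h p) (hinv p) = h := by
  simp only [hmul, hinv]; refine Prod.ext (by ring) (Prod.ext (by ring) (by ring))

lemma hmul_hinv_eq_zero_iff {v p : Heis} : hmul v (hinv p) = 0 ↔ v = p := by
  refine ⟨fun h => ?_, fun h => ?_⟩
  · rw [← hmul_hinv_hmul v p, h]; simp [hmul]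
  · subst h; simp [hmul, hinv]

lemma hmul_one_sub_smul_add_smul (h p q : Heis) (l : ℝ) :
    hmul h ((1 - l) • p + l • q) = (1 - l) • hmul h p + l • hmul h q := by
  simp only [hmul, Prod.smul_mk, Prod.mk_add_mk, Prod.smul_fst, Prod.smul_snd, Prod.fst_add,
    Prod.snd_add, smul_eq_mul]
  refine Prod.ext (by ring) (Prod.ext (by ring) (by ring))

lemma continuous_hmul : Continuous fun x : Heis × Heis => hmul x.1 x.2 := by
  unfold hmul; fun_prop

lemma continuous_hinv : Continuous hinv := by
  unfold hinv; fun_prop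

lemma norm_hinv (p : Heis) : ‖hinv p‖ = ‖p‖ := by
  simp [hinv, Prod.norm_def]

lemma one_add_norm_hmul_le (a b : Heis) : 1 + ‖hmul a b‖ ≤ (1 + ‖a‖) * (1 + ‖b‖) := by
  obtain ⟨a₁, a₂, a₃⟩ := a
  obtain ⟨b₁, b₂, b₃⟩ := b
  simp only [hmul, Prod.norm_def, Real.norm_eq_abs]
  set A := max |a₁| (max |a₂| |a₃|)
  set B := max |b₁| (max |b₂| |b₃|)
  have hA₁ : |a₁| ≤ A := le_max_left _ _
  have hA₂ : |a₂| ≤ A := (le_max_left _ _).trans (le_max_right _ _)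
  have hA₃ : |a₃| ≤ A := (le_max_right _ _).trans (le_max_right _ _)
  have hB₁ : |b₁| ≤ B := le_max_left _ _
  have hB₂ : |b₂| ≤ B := (le_max_left _ _).trans (le_max_right _ _)
  have hB₃ : |b₃| ≤ B := (le_max_right _ _).trans (le_max_right _ _)
  have hAB₁ : |a₁ * b₂| ≤ A * B := by
    rw [abs_mul]; exact mul_le_mul hA₁ hB₂ (abs_nonneg _) ((abs_nonneg _).trans hA₁)
  have hAB₂ : |b₁ * a₂| ≤ A * B := by
    rw [abs_mul, mul_comm A]; exact mul_le_mul hB₁ hA₂ (abs_nonneg _) ((abs_nonneg _).trans hB₁)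
  have h₃ : |a₃ + b₃ + (a₁ * b₂ - b₁ * a₂) / 2| ≤ |a₃| + |b₃| + (|a₁ * b₂| + |b₁ * a₂|) / 2 := by
    have := abs_add_three a₃ b₃ ((a₁ * b₂ - b₁ * a₂) / 2)
    rw [abs_div, abs_two] at this
    linarith [abs_sub (a₁ * b₂) (b₁ * a₂)]
  have hAB : 0 ≤ A * B := mul_nonneg ((abs_nonneg _).trans hA₁) ((abs_nonneg _).trans hB₁)
  have : max |a₁ + b₁| (max |a₂ + b₂| |a₃ + b₃ + (a₁ * b₂ - b₁ * a₂) / 2|) ≤ A + B + A * B :=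
    max_le ((abs_add_le _ _).trans (by linarith))
      (max_le ((abs_add_le _ _).trans (by linarith)) (h₃.trans (by linarith)))
  linarith

lemma hmul_mem_hplane (h : Heis) {p q : Heis} (hq : q ∈ hplane p) :
    hmul h q ∈ hplane (hmul h p) := by
  obtain ⟨k, hk, rfl⟩ := hq
  exact ⟨k, hk, (hmul_assoc h p k).symm⟩

lemma hmul_mem_hseg (h : Heis) {p q w : Heis} (hw : w ∈ hseg p q) :
    hmul h w ∈ hseg (hmul h p) (hmul h q) := by
  obtain ⟨l, hl₀, hl₁, rfl⟩ := hw
  exact ⟨l, hl₀, hl₁, hmul_one_sub_smul_add_smul h p q l⟩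

lemma IsHConvex.preimage_hmul {Ω : Set Heis} (hΩ : IsHConvex Ω) (h : Heis) :
    IsHConvex (hmul h ⁻¹' Ω) := fun _ hp _ hq hqΩ _ hw =>
  hΩ _ hp _ (hmul_mem_hplane h hq) hqΩ _ (hmul_mem_hseg h hw)

def IsHQuasiconcaveOn (Ω : Set Heis) (u : Heis → ℝ) : Prop :=
  ∀ p ∈ Ω, ∀ q ∈ hplane p, q ∈ Ω → ∀ w ∈ hseg p q, min (u p) (u q) ≤ u w

lemma IsHQuasiconcaveOn.comp_antitone {Ω : Set Heis} {u : Heis → ℝ} {φ : ℝ → ℝ}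
    (hu : IsHQuasiconcaveOn Ω u) (hφ : Antitone φ) : IsHQuasiconvexOn Ω (fun p => φ (u p)) :=
  fun p hp q hq hqΩ w hw => (hφ (hu p hp q hq hqΩ w hw)).trans_eq (hφ.map_min)

def rightInfDist (T : Set Heis) (p : Heis) : ℝ := sInf ((fun v => ‖hmul v (hinv p)‖) '' T)

section rightInfDist

lemma continuous_norm_hmul_hinv (p : Heis) : Continuous fun v => ‖hmul v (hinv p)‖ :=
  (continuous_hmul.comp (continuous_id.prodMk continuous_const)).norm

variable {T : Set Heis}

lemma rightInfDist_nonneg (T : Set Heis) (p : Heis) : 0 ≤ rightInfDist T p :=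
  Real.sInf_nonneg (by rintro _ ⟨v, -, rfl⟩; exact norm_nonneg _)

lemma rightInfDist_le {v : Heis} (hv : v ∈ T) (p : Heis) :
    rightInfDist T p ≤ ‖hmul v (hinv p)‖ :=
  csInf_le ⟨0, by rintro _ ⟨v, -, rfl⟩; exact norm_nonneg _⟩ (mem_image_of_mem _ hv)

lemma IsCompact.continuous_rightInfDist (hT : IsCompact T) : Continuous (rightInfDist T) :=
  hT.continuous_sInf (f := fun p v => ‖hmul v (hinv p)‖)
    (continuous_hmul.comp (continuous_snd.prodMk (continuous_hinv.comp continuous_fst))).norm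

lemma IsCompact.rightInfDist_eq_zero_iff (hT : IsCompact T) (hne : T.Nonempty) {p : Heis} :
    rightInfDist T p = 0 ↔ p ∈ T := by
  refine ⟨fun h => ?_, fun hp => le_antisymm ?_ (rightInfDist_nonneg T p)⟩
  · obtain ⟨v, hv, hvmin⟩ := hT.exists_sInf_image_eq hne (continuous_norm_hmul_hinv p).continuousOn
    rw [rightInfDist, hvmin, norm_eq_zero, hmul_hinv_eq_zero_iff] at h
    exact h ▸ hv
  · simpa [hmul_hinv_eq_zero_iff.2 rfl] using rightInfDist_le hp p

lemma IsHConvex.isHQuasiconcaveOn_rightInfDist {Ω S : Set Heis} (hΩ : IsHConvex Ω)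
    (hSΩ : S ⊆ Ωᶜ) (hS : S.Nonempty)
    (htrans : ∀ p ∈ Ω, ∀ h, ‖h‖ < rightInfDist (closure S) p → hmul h p ∈ Ω) :
    IsHQuasiconcaveOn Ω (rightInfDist (closure S)) := by
  intro p hp q hq hqΩ w hw
  refine le_csInf (hS.closure.image _) ?_
  rintro _ ⟨v, hv, rfl⟩
  refine closure_minimal (fun v hv => ?_)
    (isClosed_le continuous_const (continuous_norm_hmul_hinv w)) hv
  rw [mem_ofPred_eq]
  by_contra! hlt
  obtain ⟨hp', hq'⟩ := lt_min_iff.1 hlt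
  have hvΩ := hΩ.preimage_hmul (hmul v (hinv w)) p (htrans p hp _ hp') q hq
    (htrans q hqΩ _ hq') w hw
  rw [mem_preimage, hmul_hinv_hmul] at hvΩ
  exact hSΩ hv hvΩ

end rightInfDist

theorem IsHConvex.exists_isHQuasiconcaveOn_eq_zero_iff_mem_frontier {Ω : Set Heis}
    (hΩ : IsHConvex Ω) (hb : Bornology.IsBounded Ω) :
    ∃ D : Heis → ℝ, Continuous D ∧ (∀ p, 0 ≤ D p) ∧
      (∀ p ∈ closure Ω, D p = 0 ↔ p ∈ frontier Ω) ∧ IsHQuasiconcaveOn Ω D := by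
  obtain ⟨r, hr₀, hΩr⟩ := hb.subset_closedBall_lt 0 0
  have hr : ∀ p ∈ closure Ω, ‖p‖ ≤ r := fun p hp =>
    mem_closedBall_zero_iff.1 (closure_minimal hΩr Metric.isClosed_closedBall hp)
  obtain ⟨v₀, hv₀⟩ := NormedSpace.exists_lt_norm ℝ Heis r
  -- `R` is large enough to contain every translate `h · p` that the quasiconcavity argument uses.
  set R := (1 + ‖v₀‖) * (1 + r) ^ 2
  have hvR : 1 + ‖v₀‖ ≤ R := le_mul_of_one_le_right (by positivity) (one_le_pow₀ (by linarith))
  have hrR : r < R := by linarith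
  set S := Ωᶜ ∩ Metric.closedBall 0 R
  have hv₀S : v₀ ∈ S := ⟨fun h => hv₀.not_ge (hr v₀ (subset_closure h)),
    mem_closedBall_zero_iff.2 (by linarith)⟩
  have hT : IsCompact (closure S) :=
    (Metric.isBounded_closedBall.subset inter_subset_right).isCompact_closure
  refine ⟨rightInfDist (closure S), hT.continuous_rightInfDist, rightInfDist_nonneg _,
    fun p hp => ?_, hΩ.isHQuasiconcaveOn_rightInfDist inter_subset_left ⟨v₀, hv₀S⟩ ?_⟩
  · rw [hT.rightInfDist_eq_zero_iff (⟨v₀, subset_closure hv₀S⟩ : (closure S).Nonempty),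
      frontier_eq_closure_inter_closure]
    refine ⟨fun hpS => ⟨hp, closure_mono inter_subset_left hpS⟩, fun ⟨_, hpc⟩ => ?_⟩
    have hpR : p ∈ Metric.ball 0 R := mem_ball_zero_iff.2 ((hr p hp).trans_lt hrR)
    have hsub : Metric.ball 0 R ∩ Ωᶜ ⊆ S := fun x hx => ⟨hx.2, Metric.ball_subset_closedBall hx.1⟩
    exact closure_mono hsub (Metric.isOpen_ball.inter_closure ⟨hpR, hpc⟩)
  · intro p hp h hh
    have hpr := hr p (subset_closure hp)
    have hhp : 1 + ‖hmul h p‖ ≤ R := calc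
      1 + ‖hmul h p‖ ≤ (1 + ‖h‖) * (1 + ‖p‖) := one_add_norm_hmul_le h p
      _ ≤ (1 + ‖hmul v₀ (hinv p)‖) * (1 + ‖p‖) := by
        gcongr; exact hh.le.trans (rightInfDist_le (subset_closure hv₀S) p)
      _ ≤ (1 + ‖v₀‖) * (1 + ‖p‖) * (1 + ‖p‖) := by
        gcongr; simpa only [norm_hinv] using one_add_norm_hmul_le v₀ (hinv p)
      _ ≤ (1 + ‖v₀‖) * (1 + r) ^ 2 := by rw [mul_assoc, ← sq]; gcongr
    by_contra hout
    have hhpS : hmul h p ∈ S := ⟨hout, mem_closedBall_zero_iff.2 (by linarith)⟩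
    have := rightInfDist_le (subset_closure hhpS) p
    rw [hmul_hmul_hinv] at this
    exact hh.not_ge this

section Modulus

variable {X : Type*} [TopologicalSpace X] {A : Set X} {D g : X → ℝ}

lemma continuous_mul_clamp_div (hD : ContinuousOn D A) (hg : ContinuousOn g A)
    (hg₀ : ∀ q ∈ A, 0 ≤ g q) (hgD : ∀ q ∈ A, D q = 0 → g q = 0) :
    Continuous fun x : ℝ × A => g x.2 * max 0 (min 1 (x.1 / D x.2)) := by
  have hD' : Continuous fun x : ℝ × A => D x.2 := hD.domRestrict.comp continuous_snd
  have hg' : Continuous fun x : ℝ × A => g x.2 := hg.domRestrict.comp continuous_snd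
  rw [continuous_iff_continuousAt]
  rintro ⟨t, q⟩
  by_cases hq : D q = 0
  · -- the clamp lies in `[0, 1]`, so the product is squeezed between `0` and `g → g q = 0`
    have hgq : g q = 0 := hgD q q.2 hq
    have hlim : Filter.Tendsto (fun x : ℝ × A => g x.2) (nhds (t, q)) (nhds 0) :=
      hgq ▸ hg'.tendsto (t, q)
    rw [ContinuousAt, hgq, zero_mul]
    refine tendsto_of_tendsto_of_tendsto_of_le_of_le tendsto_const_nhds hlim
      (fun x => mul_nonneg (hg₀ x.2 x.2.2) (le_max_left _ _)) (fun x => ?_)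
    exact mul_le_of_le_one_right (hg₀ x.2 x.2.2) (max_le zero_le_one (min_le_left _ _))
  · exact hg'.continuousAt.mul (continuousAt_const.max (continuousAt_const.min
      (continuous_fst.continuousAt.div hD'.continuousAt hq)))

theorem IsCompact.exists_continuous_monotone_le_comp (hA : IsCompact A) (hD : ContinuousOn D A)
    (hD₀ : ∀ q ∈ A, 0 ≤ D q) (hg : ContinuousOn g A) (hg₀ : ∀ q ∈ A, 0 ≤ g q)
    (hgD : ∀ q ∈ A, D q = 0 → g q = 0) :
    ∃ ψ : ℝ → ℝ, Continuous ψ ∧ Monotone ψ ∧ ψ 0 = 0 ∧ ∀ q ∈ A, g q ≤ ψ (D q) := by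
  have := isCompact_iff_compactSpace.1 hA
  set F : ℝ → A → ℝ := fun t q => g q * max 0 (min 1 (t / D q))
  have hF : Continuous ↿F := continuous_mul_clamp_div hD hg hg₀ hgD
  have hbdd : ∀ t, BddAbove (range (F t)) := fun t =>
    (isCompact_range (hF.comp (Continuous.prodMk_right t))).bddAbove
  refine ⟨fun t => ⨆ q, F t q, ?_, fun s t hst => ciSup_mono (hbdd t) fun q => ?_,
    by simp [F], fun q hq => ?_⟩
  · have hψ := isCompact_univ.continuous_sSup hF
    simp only [image_univ] at hψ
    exact hψ
  · exact mul_le_mul_of_nonneg_left (max_le_max le_rfl (min_le_min le_rfl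
      (div_le_div_of_nonneg_right hst (hD₀ q q.2)))) (hg₀ q q.2)
  · refine le_trans ?_ (le_ciSup (hbdd (D q)) ⟨q, hq⟩)
    by_cases hq₀ : D q = 0
    · simp [F, hq₀, hgD q hq hq₀]
    · simp [F, div_self hq₀]

end Modulus

/-- Proposition 4.1 (Existence of an h-quasiconvex barrier): if `Ω` is bounded
and h-convex and `f ∈ C(Ω̄)` satisfies `f = K` on `∂Ω` and `f ≤ K` in `Ω̄`,
then there is an h-quasiconvex `f̲ ∈ C(Ω̄)` with `f̲ ≤ f` in `Ω̄` and
`f̲ = K` on `∂Ω`. -/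
theorem hquasiconvex_barrier
    (Ω : Set Heis) (hΩb : Bornology.IsBounded Ω) (hΩhc : IsHConvex Ω)
    (f : Heis → ℝ) (K : ℝ) (hf : ContinuousOn f (closure Ω))
    (hfK : ∀ p ∈ frontier Ω, f p = K) (hfle : ∀ p ∈ closure Ω, f p ≤ K) :
    ∃ fbar : Heis → ℝ, ContinuousOn fbar (closure Ω) ∧
      IsHQuasiconvexOn Ω fbar ∧
      (∀ p ∈ closure Ω, fbar p ≤ f p) ∧
      (∀ p ∈ frontier Ω, fbar p = K) := by
  obtain ⟨D, hDc, hD₀, hDfr, hDqc⟩ :=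
    hΩhc.exists_isHQuasiconcaveOn_eq_zero_iff_mem_frontier hΩb
  obtain ⟨ψ, hψc, hψm, hψ₀, hψ⟩ := hΩb.isCompact_closure.exists_continuous_monotone_le_comp
    (g := fun p => K - f p) hDc.continuousOn (fun p _ => hD₀ p) (continuousOn_const.sub hf)
    (fun p hp => sub_nonneg.2 (hfle p hp)) (fun p hp hDp => by simp [hfK p ((hDfr p hp).1 hDp)])
  refine ⟨fun p => K - ψ (D p), (continuous_const.sub (hψc.comp hDc)).continuousOn,
    hDqc.comp_antitone fun s t hst => sub_le_sub_left (hψm hst) K,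
    fun p hp => by linarith [hψ p hp], fun p hp => ?_⟩
  simp only [(hDfr p (frontier_subset_closure hp)).2 hp, hψ₀, sub_zero]
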